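/- arXiv:2406.06090 — 6 statements merged into one kernel-verified Lean document; each statement's English description precedes it below -/
import Mathlib

section
/- Weak duality for the PT model: if (π, Q, P) is PT-dual-feasible and (v, u) is PT-primal-feasible with goal price τ, then τ·(∑_{i∈I} Q i + ∑_{r∈R} P r) ≤ ∑_{i∈I} v i · X i o − ∑_{r∈R} u r · Y r o. -/
open Finset

/-- A triple `(π, Q, P)` is PT-dual-feasible. -/
def PTDualFeasible {I R J : Type*} [Fintype I] [Fintype R] [Fintype J]
    (X : I → J → ℝ) (Y : R → J → ℝ) (o : J)
    (π : J → ℝ) (Q : I → ℝ) (P : R → ℝ) : Prop :=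
  (∀ j, 0 ≤ π j) ∧ (∀ i, 0 ≤ Q i) ∧ (∀ r, 0 ≤ P r) ∧
  (∀ i, (∑ j, X i j * π j) + Q i * X i o = X i o) ∧
  (∀ r, -(∑ j, Y r j * π j) + P r * Y r o = -(Y r o))

/-- A pair `(v, u)` is PT-primal-feasible with goal price `τ`. -/
def PTPrimalFeasible {I R J : Type*} [Fintype I] [Fintype R] [Fintype J]
    (X : I → J → ℝ) (Y : R → J → ℝ) (o : J) (τ : ℝ)
    (v : I → ℝ) (u : R → ℝ) : Prop :=
  (∀ j, 0 ≤ (∑ i, v i * X i j) - ∑ r, u r * Y r j) ∧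
  (∀ i, τ ≤ X i o * v i) ∧ (∀ r, τ ≤ Y r o * u r)

/-!
Pairing the primal variables with the dual equality constraints splits the primal objective
`v·X o - u·Y o` into three sums: the dual weights `π j` times the primal slacks
`v·X j - u·Y j`, plus `Q i` times `X i o * v i`, plus `P r` times `Y r o * u r`.
Dual and primal feasibility make the first sum nonnegative and bound the other two below by
`τ * ∑ Q` and `τ * ∑ P`.
-/

section

variable {I R J α : Type*} [Fintype I] [Fintype R] [Fintype J]

theorem sum_mul_sum_comm [CommSemiring α] (π : J → α) (v : I → α) (X : I → J → α) :
    ∑ j, π j * ∑ i, v i * X i j = ∑ i, v i * ∑ j, X i j * π j := by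
  simp only [mul_sum]
  rw [sum_comm]
  exact sum_congr rfl fun i _ => sum_congr rfl fun j _ => by ring

theorem objective_eq_of_dual_constraints [CommRing α] (X : I → J → α) (Y : R → J → α) (o : J)
    (π : J → α) (Q : I → α) (P : R → α) (v : I → α) (u : R → α)
    (hX : ∀ i, (∑ j, X i j * π j) + Q i * X i o = X i o)
    (hY : ∀ r, -(∑ j, Y r j * π j) + P r * Y r o = -(Y r o)) :
    (∑ i, v i * X i o) - ∑ r, u r * Y r o =
      (∑ j, π j * ((∑ i, v i * X i j) - ∑ r, u r * Y r j)) +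
        (∑ i, Q i * (X i o * v i)) + ∑ r, P r * (Y r o * u r) := by
  have hX' : ∀ i, ∑ j, X i j * π j = X i o - Q i * X i o := fun i => eq_sub_of_add_eq (hX i)
  have hY' : ∀ r, ∑ j, Y r j * π j = Y r o + P r * Y r o := fun r => by
    linear_combination -(hY r)
  have hslack : ∑ j, π j * ((∑ i, v i * X i j) - ∑ r, u r * Y r j) =
      (∑ i, v i * (X i o - Q i * X i o)) - ∑ r, u r * (Y r o + P r * Y r o) := by
    simp only [mul_sub, sum_sub_distrib, sum_mul_sum_comm, hX', hY']
  rw [hslack]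
  simp only [mul_sub, mul_add, sum_sub_distrib, sum_add_distrib]
  have hQ : ∑ i, v i * (Q i * X i o) = ∑ i, Q i * (X i o * v i) :=
    sum_congr rfl fun i _ => by ring
  have hP : ∑ r, u r * (P r * Y r o) = ∑ r, P r * (Y r o * u r) :=
    sum_congr rfl fun r _ => by ring
  rw [hQ, hP]
  ring

theorem mul_sum_le_sum_mul_of_le [CommSemiring α] [PartialOrder α] [IsOrderedRing α]
    {τ : α} {c w : I → α} (hc : ∀ i, 0 ≤ c i) (hw : ∀ i, τ ≤ w i) :
    τ * ∑ i, c i ≤ ∑ i, c i * w i := by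
  rw [mul_sum]
  exact sum_le_sum fun i _ => by rw [mul_comm]; exact mul_le_mul_of_nonneg_left (hw i) (hc i)

end

theorem pt_weak_duality_general
    {I R J : Type*} [Fintype I] [Fintype R] [Fintype J]
    (X : I → J → ℝ) (Y : R → J → ℝ)
    (o : J) (τ : ℝ)
    (π : J → ℝ) (Q : I → ℝ) (P : R → ℝ)
    (hdual : PTDualFeasible X Y o π Q P)
    (v : I → ℝ) (u : R → ℝ)
    (hprimal : PTPrimalFeasible X Y o τ v u) :
    τ * ((∑ i, Q i) + ∑ r, P r) ≤ (∑ i, v i * X i o) - ∑ r, u r * Y r o := by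
  obtain ⟨hπ, hQ, hP, hX, hY⟩ := hdual
  obtain ⟨hslack, hvX, huY⟩ := hprimal
  rw [objective_eq_of_dual_constraints X Y o π Q P v u hX hY]
  have h₀ : 0 ≤ ∑ j, π j * ((∑ i, v i * X i j) - ∑ r, u r * Y r j) :=
    sum_nonneg fun j _ => mul_nonneg (hπ j) (hslack j)
  have h₁ := mul_sum_le_sum_mul_of_le hQ hvX
  have h₂ := mul_sum_le_sum_mul_of_le hP huY
  linarith

/-- Weak duality for the PT model. -/
theorem pt_weak_duality
    {I R J : Type*} [Fintype I] [Fintype R] [Fintype J]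
    [Nonempty I] [Nonempty R] [Nonempty J]
    (X : I → J → ℝ) (Y : R → J → ℝ)
    (hX : ∀ i j, 0 < X i j) (hY : ∀ r j, 0 < Y r j)
    (o : J) (τ : ℝ) (hτ : 0 < τ)
    (π : J → ℝ) (Q : I → ℝ) (P : R → ℝ)
    (hdual : PTDualFeasible X Y o π Q P)
    (v : I → ℝ) (u : R → ℝ)
    (hprimal : PTPrimalFeasible X Y o τ v u) :
    τ * ((∑ i, Q i) + ∑ r, P r) ≤ (∑ i, v i * X i o) - ∑ r, u r * Y r o :=
  pt_weak_duality_general X Y o τ π Q P hdual v u hprimal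
end

section
/- Optimality certificate for the PT model: if (π, Q, P) is PT-dual-feasible, (v, u) is PT-primal-feasible with goal price τ, and the objective values coincide, i.e. τ·(∑_{i∈I} Q i + ∑_{r∈R} P r) = ∑_{i∈I} v i · X i o − ∑_{r∈R} u r · Y r o, then (π, Q, P) maximizes τ·(∑_i Q' i + ∑_r P' r) over all PT-dual-feasible triples (π', Q', P') and (v, u) minimizes ∑_i v' i · X i o − ∑_r u' r · Y r o over all PT-primal-feasible pairs (v', u'). -/
open Finset

/-! Weak duality: by the dual equality constraints, the primal objective at `(v, u)` minus the dual
objective at `(π, Q, P)` is the sum of the complementary-slackness terms `π j · slack_j`,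
`Q i · (X i o v i - τ)` and `P r · (Y r o u r - τ)`, each nonnegative by feasibility. Hence equal
objective values certify optimality on both sides. -/

section

variable {I R J : Type*} [Fintype I] [Fintype R] [Fintype J]
  {X : I → J → ℝ} {Y : R → J → ℝ} {o : J} {π : J → ℝ} {Q : I → ℝ} {P : R → ℝ}

lemma sum_mul_sum_comm_s1 {K : Type*} [Fintype K] (w : K → ℝ) (Z : K → J → ℝ) :
    ∑ k, w k * ∑ j, Z k j * π j = ∑ j, π j * ∑ k, w k * Z k j := by
  simp only [mul_sum]
  rw [sum_comm]
  exact sum_congr rfl fun j _ => sum_congr rfl fun k _ => by ring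

lemma pt_primal_objective_eq
    (hin : ∀ i, (∑ j, X i j * π j) + Q i * X i o = X i o)
    (hout : ∀ r, -(∑ j, Y r j * π j) + P r * Y r o = -(Y r o)) (v : I → ℝ) (u : R → ℝ) :
    (∑ i, v i * X i o) - ∑ r, u r * Y r o
      = (∑ j, π j * ((∑ i, v i * X i j) - ∑ r, u r * Y r j))
        + ((∑ i, X i o * v i * Q i) + ∑ r, Y r o * u r * P r) := by
  have hX : ∑ i, v i * X i o = (∑ i, v i * ∑ j, X i j * π j) + ∑ i, X i o * v i * Q i := by
    rw [← sum_add_distrib]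
    exact sum_congr rfl fun i _ => by linear_combination (-v i) * hin i
  have hY : ∑ r, u r * Y r o = (∑ r, u r * ∑ j, Y r j * π j) - ∑ r, Y r o * u r * P r := by
    rw [← sum_sub_distrib]
    exact sum_congr rfl fun r _ => by linear_combination u r * hout r
  rw [hX, hY, sum_mul_sum_comm_s1, sum_mul_sum_comm_s1]
  simp only [mul_sub, sum_sub_distrib]
  ring

lemma PTDualFeasible.objective_le_of_primalFeasible {τ : ℝ} (hd : PTDualFeasible X Y o π Q P)
    {v : I → ℝ} {u : R → ℝ} (hp : PTPrimalFeasible X Y o τ v u) :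
    τ * ((∑ i, Q i) + ∑ r, P r) ≤ (∑ i, v i * X i o) - ∑ r, u r * Y r o := by
  obtain ⟨hπ, hQ, hP, hin, hout⟩ := hd
  obtain ⟨hslack, hv, hu⟩ := hp
  have hslack_term : 0 ≤ ∑ j, π j * ((∑ i, v i * X i j) - ∑ r, u r * Y r j) :=
    sum_nonneg fun j _ => mul_nonneg (hπ j) (hslack j)
  have hv_term : ∑ i, τ * Q i ≤ ∑ i, X i o * v i * Q i :=
    sum_le_sum fun i _ => mul_le_mul_of_nonneg_right (hv i) (hQ i)
  have hu_term : ∑ r, τ * P r ≤ ∑ r, Y r o * u r * P r :=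
    sum_le_sum fun r _ => mul_le_mul_of_nonneg_right (hu r) (hP r)
  rw [pt_primal_objective_eq hin hout, mul_add, mul_sum, mul_sum]
  linarith

end

theorem pt_optimality_certificate_general
    {I R J : Type*} [Fintype I] [Fintype R] [Fintype J]
    (X : I → J → ℝ) (Y : R → J → ℝ)
    (o : J) (τ : ℝ)
    (π : J → ℝ) (Q : I → ℝ) (P : R → ℝ)
    (hdual : PTDualFeasible X Y o π Q P)
    (v : I → ℝ) (u : R → ℝ)
    (hprimal : PTPrimalFeasible X Y o τ v u)
    (heq : τ * ((∑ i, Q i) + ∑ r, P r)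
      = (∑ i, v i * X i o) - ∑ r, u r * Y r o) :
    (∀ (π' : J → ℝ) (Q' : I → ℝ) (P' : R → ℝ),
        PTDualFeasible X Y o π' Q' P' →
        τ * ((∑ i, Q' i) + ∑ r, P' r) ≤ τ * ((∑ i, Q i) + ∑ r, P r)) ∧
    (∀ (v' : I → ℝ) (u' : R → ℝ),
        PTPrimalFeasible X Y o τ v' u' →
        (∑ i, v i * X i o) - (∑ r, u r * Y r o)
          ≤ (∑ i, v' i * X i o) - ∑ r, u' r * Y r o) :=
  ⟨fun _ _ _ hdual' => heq ▸ hdual'.objective_le_of_primalFeasible hprimal,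
    fun _ _ hprimal' => heq ▸ hdual.objective_le_of_primalFeasible hprimal'⟩

/-- Optimality certificate for the PT model. -/
theorem pt_optimality_certificate
    {I R J : Type*} [Fintype I] [Fintype R] [Fintype J]
    [Nonempty I] [Nonempty R] [Nonempty J]
    (X : I → J → ℝ) (Y : R → J → ℝ)
    (hX : ∀ i j, 0 < X i j) (hY : ∀ r j, 0 < Y r j)
    (o : J) (τ : ℝ) (hτ : 0 < τ)
    (π : J → ℝ) (Q : I → ℝ) (P : R → ℝ)
    (hdual : PTDualFeasible X Y o π Q P)
    (v : I → ℝ) (u : R → ℝ)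
    (hprimal : PTPrimalFeasible X Y o τ v u)
    (heq : τ * ((∑ i, Q i) + ∑ r, P r)
      = (∑ i, v i * X i o) - ∑ r, u r * Y r o) :
    (∀ (π' : J → ℝ) (Q' : I → ℝ) (P' : R → ℝ),
        PTDualFeasible X Y o π' Q' P' →
        τ * ((∑ i, Q' i) + ∑ r, P' r) ≤ τ * ((∑ i, Q i) + ∑ r, P r)) ∧
    (∀ (v' : I → ℝ) (u' : R → ℝ),
        PTPrimalFeasible X Y o τ v' u' →
        (∑ i, v i * X i o) - (∑ r, u r * Y r o)
          ≤ (∑ i, v' i * X i o) - ∑ r, u' r * Y r o) :=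
  pt_optimality_certificate_general X Y o τ π Q P hdual v u hprimal heq
end

section
/- Complementary slackness for intensities in the PT model: if (π, Q, P) is PT-dual-feasible, (v, u) is PT-primal-feasible with goal price τ, and τ·(∑_{i∈I} Q i + ∑_{r∈R} P r) = ∑_{i∈I} v i · X i o − ∑_{r∈R} u r · Y r o, then for every j ∈ J one has (∑_{i∈I} v i · X i j − ∑_{r∈R} u r · Y r j) · π j = 0. -/
open Finset

/-! Zero duality gap: pairing the primal slacks with the intensities `π` and substituting the
dual equalities, the hypothesis on the objective together with primal feasibility and `Q, P ≥ 0`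
forces `∑ⱼ slackⱼ πⱼ ≤ 0`; a sum of nonnegative terms, it vanishes termwise. -/

section

variable {I R J : Type*} [Fintype I] [Fintype R] [Fintype J]

theorem sum_sub_sum_mul_eq_sum_mul_sum_sub (X : I → J → ℝ) (Y : R → J → ℝ)
    (v : I → ℝ) (u : R → ℝ) (π : J → ℝ) :
    ∑ j, ((∑ i, v i * X i j) - ∑ r, u r * Y r j) * π j
      = (∑ i, v i * ∑ j, X i j * π j) - ∑ r, u r * ∑ j, Y r j * π j := by
  simp_rw [sub_mul, sum_sub_distrib, sum_mul, mul_sum, mul_assoc]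
  rw [sum_comm, sum_comm (f := fun j r => u r * (Y r j * π j))]

theorem PTDualFeasible.sum_slack_mul_eq {X : I → J → ℝ} {Y : R → J → ℝ} {o : J}
    {π : J → ℝ} {Q : I → ℝ} {P : R → ℝ} (hdual : PTDualFeasible X Y o π Q P)
    (v : I → ℝ) (u : R → ℝ) :
    ∑ j, ((∑ i, v i * X i j) - ∑ r, u r * Y r j) * π j
      = ((∑ i, v i * X i o) - ∑ r, u r * Y r o)
        - (∑ i, X i o * v i * Q i) - ∑ r, Y r o * u r * P r := by
  obtain ⟨-, -, -, hinput, houtput⟩ := hdual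
  have hX : ∀ i, ∑ j, X i j * π j = X i o - Q i * X i o := fun i => by linarith [hinput i]
  have hY : ∀ r, ∑ j, Y r j * π j = Y r o + P r * Y r o := fun r => by linarith [houtput r]
  simp_rw [sum_sub_sum_mul_eq_sum_mul_sum_sub, hX, hY, mul_sub, mul_add, sum_sub_distrib,
    sum_add_distrib]
  have hQ : ∑ i, v i * (Q i * X i o) = ∑ i, X i o * v i * Q i :=
    sum_congr rfl fun i _ => by ring
  have hP : ∑ r, u r * (P r * Y r o) = ∑ r, Y r o * u r * P r :=
    sum_congr rfl fun r _ => by ring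
  rw [hQ, hP]
  ring

theorem PTPrimalFeasible.mul_sum_add_sum_le {X : I → J → ℝ} {Y : R → J → ℝ} {o : J} {τ : ℝ}
    {v : I → ℝ} {u : R → ℝ} (hprimal : PTPrimalFeasible X Y o τ v u)
    {Q : I → ℝ} {P : R → ℝ} (hQ : ∀ i, 0 ≤ Q i) (hP : ∀ r, 0 ≤ P r) :
    τ * ((∑ i, Q i) + ∑ r, P r) ≤ (∑ i, X i o * v i * Q i) + ∑ r, Y r o * u r * P r := by
  obtain ⟨-, hv, hu⟩ := hprimal
  rw [mul_add, mul_sum, mul_sum]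
  exact add_le_add (sum_le_sum fun i _ => mul_le_mul_of_nonneg_right (hv i) (hQ i))
    (sum_le_sum fun r _ => mul_le_mul_of_nonneg_right (hu r) (hP r))

end

theorem pt_complementary_slackness_intensities_general
    {I R J : Type*} [Fintype I] [Fintype R] [Fintype J]
    (X : I → J → ℝ) (Y : R → J → ℝ)
    (o : J) (τ : ℝ)
    (π : J → ℝ) (Q : I → ℝ) (P : R → ℝ)
    (hdual : PTDualFeasible X Y o π Q P)
    (v : I → ℝ) (u : R → ℝ)
    (hprimal : PTPrimalFeasible X Y o τ v u)
    (heq : τ * ((∑ i, Q i) + ∑ r, P r)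
      = (∑ i, v i * X i o) - ∑ r, u r * Y r o) :
    ∀ j, ((∑ i, v i * X i j) - ∑ r, u r * Y r j) * π j = 0 := by
  have hnonneg : ∀ j ∈ univ, 0 ≤ ((∑ i, v i * X i j) - ∑ r, u r * Y r j) * π j :=
    fun j _ => mul_nonneg (hprimal.1 j) (hdual.1 j)
  have hle := hprimal.mul_sum_add_sum_le hdual.2.1 hdual.2.2.1
  have hsum_nonpos : ∑ j, ((∑ i, v i * X i j) - ∑ r, u r * Y r j) * π j ≤ 0 := by
    rw [hdual.sum_slack_mul_eq]
    linarith
  intro j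
  exact (sum_eq_zero_iff_of_nonneg hnonneg).mp
    (le_antisymm hsum_nonpos (sum_nonneg hnonneg)) j (mem_univ j)

/-- Complementary slackness for intensities in the PT model. -/
theorem pt_complementary_slackness_intensities
    {I R J : Type*} [Fintype I] [Fintype R] [Fintype J]
    [Nonempty I] [Nonempty R] [Nonempty J]
    (X : I → J → ℝ) (Y : R → J → ℝ)
    (hX : ∀ i j, 0 < X i j) (hY : ∀ r j, 0 < Y r j)
    (o : J) (τ : ℝ) (hτ : 0 < τ)
    (π : J → ℝ) (Q : I → ℝ) (P : R → ℝ)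
    (hdual : PTDualFeasible X Y o π Q P)
    (v : I → ℝ) (u : R → ℝ)
    (hprimal : PTPrimalFeasible X Y o τ v u)
    (heq : τ * ((∑ i, Q i) + ∑ r, P r)
      = (∑ i, v i * X i o) - ∑ r, u r * Y r o) :
    ∀ j, ((∑ i, v i * X i j) - ∑ r, u r * Y r j) * π j = 0 :=
  pt_complementary_slackness_intensities_general X Y o τ π Q P hdual v u hprimal heq
end

section
/- (Theorem 1) Bounds on the PT efficiency: if (v, u) is PT-primal-feasible with goal price τ and the normalized virtual input satisfies ∑_{i∈I} v i · X i o = 1, then the virtual output β := ∑_{r∈R} u r · Y r o satisfies 0 < β ≤ 1; consequently the PT efficiency E := (∑_{r∈R} u r · Y r o) / (∑_{i∈I} v i · X i o) satisfies 0 < E ≤ 1, and the PT inefficiency F := (∑_i v i · X i o − ∑_r u r · Y r o)/(∑_i v i · X i o) satisfies F = 1 − E and 0 ≤ F < 1. -/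
open Finset

section

variable {I R J : Type*} [Fintype I] [Fintype R] [Fintype J]
  {X : I → J → ℝ} {Y : R → J → ℝ} {o : J} {τ : ℝ} {v : I → ℝ} {u : R → ℝ}

theorem PTPrimalFeasible.sum_output_pos [Nonempty R] (h : PTPrimalFeasible X Y o τ v u)
    (hτ : 0 < τ) : 0 < ∑ r, u r * Y r o :=
  sum_pos (fun r _ => mul_comm (Y r o) (u r) ▸ hτ.trans_le (h.2.2 r)) univ_nonempty

theorem PTPrimalFeasible.sum_output_le_sum_input (h : PTPrimalFeasible X Y o τ v u) :
    ∑ r, u r * Y r o ≤ ∑ i, v i * X i o :=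
  sub_nonneg.1 (h.1 o)

end

theorem pt_efficiency_bounds_general
    {I R J : Type*} [Fintype I] [Fintype R] [Fintype J]
    [Nonempty R]
    (X : I → J → ℝ) (Y : R → J → ℝ)
    (o : J) (τ : ℝ) (hτ : 0 < τ)
    (v : I → ℝ) (u : R → ℝ)
    (hprimal : PTPrimalFeasible X Y o τ v u)
    (hnorm : ∑ i, v i * X i o = 1) :
    (0 < ∑ r, u r * Y r o) ∧ (∑ r, u r * Y r o ≤ 1) ∧
    (0 < (∑ r, u r * Y r o) / (∑ i, v i * X i o)) ∧
    ((∑ r, u r * Y r o) / (∑ i, v i * X i o) ≤ 1) ∧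
    (((∑ i, v i * X i o) - ∑ r, u r * Y r o) / (∑ i, v i * X i o)
      = 1 - (∑ r, u r * Y r o) / (∑ i, v i * X i o)) ∧
    (0 ≤ ((∑ i, v i * X i o) - ∑ r, u r * Y r o) / (∑ i, v i * X i o)) ∧
    (((∑ i, v i * X i o) - ∑ r, u r * Y r o) / (∑ i, v i * X i o) < 1) := by
  have hβ_pos := hprimal.sum_output_pos hτ
  have hβ_le : ∑ r, u r * Y r o ≤ 1 := hnorm ▸ hprimal.sum_output_le_sum_input
  rw [hnorm, div_one, div_one]
  exact ⟨hβ_pos, hβ_le, hβ_pos, hβ_le, rfl, sub_nonneg.2 hβ_le, sub_lt_self 1 hβ_pos⟩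

/-- (Theorem 1) Bounds on the PT efficiency. -/
theorem pt_efficiency_bounds
    {I R J : Type*} [Fintype I] [Fintype R] [Fintype J]
    [Nonempty I] [Nonempty R] [Nonempty J]
    (X : I → J → ℝ) (Y : R → J → ℝ)
    (hX : ∀ i j, 0 < X i j) (hY : ∀ r j, 0 < Y r j)
    (o : J) (τ : ℝ) (hτ : 0 < τ)
    (v : I → ℝ) (u : R → ℝ)
    (hprimal : PTPrimalFeasible X Y o τ v u)
    (hnorm : ∑ i, v i * X i o = 1) :
    (0 < ∑ r, u r * Y r o) ∧ (∑ r, u r * Y r o ≤ 1) ∧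
    (0 < (∑ r, u r * Y r o) / (∑ i, v i * X i o)) ∧
    ((∑ r, u r * Y r o) / (∑ i, v i * X i o) ≤ 1) ∧
    (((∑ i, v i * X i o) - ∑ r, u r * Y r o) / (∑ i, v i * X i o)
      = 1 - (∑ r, u r * Y r o) / (∑ i, v i * X i o)) ∧
    (0 ≤ ((∑ i, v i * X i o) - ∑ r, u r * Y r o) / (∑ i, v i * X i o)) ∧
    (((∑ i, v i * X i o) - ∑ r, u r * Y r o) / (∑ i, v i * X i o) < 1) :=
  pt_efficiency_bounds_general X Y o τ hτ v u hprimal hnorm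
end

section
/- Weak duality for the TSc model: if (π, Q, P) is TSc-dual-feasible with scalar κ and (v, u, w) is TSc-primal-feasible with goal price τ, then τ·(∑_{i∈I} Q i + ∑_{r∈R} P r) ≤ ∑_{i∈I} v i · X i o − ∑_{r∈R} u r · Y r o + κ·w. -/
/-
Weak duality by the usual Lagrangian argument. Multiplying the input balance rows by `v i`
and the output balance rows by `u r` and summing rewrites the primal objective as
`∑ Q i (X i o v i) + ∑ P r (Y r o u r) + ∑ π j (slack of unit j)`, where the slack of unit
`j` is `∑ v X j - ∑ u Y j + w ≥ 0` and `∑ π j = κ` accounts for `κ w`. The first two sums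
are at least `τ ∑ Q` and `τ ∑ P` by the goal-price constraints, and the last is nonnegative.
-/

open Finset

/-- A triple `(π, Q, P)` is TSc-dual-feasible with scalar `κ`. -/
def TScDualFeasible {I R J : Type*} [Fintype I] [Fintype R] [Fintype J]
    (X : I → J → ℝ) (Y : R → J → ℝ) (o : J) (κ : ℝ)
    (π : J → ℝ) (Q : I → ℝ) (P : R → ℝ) : Prop :=
  (∀ j, 0 ≤ π j) ∧ (∀ i, 0 ≤ Q i) ∧ (∀ r, 0 ≤ P r) ∧
  (∀ i, (∑ j, X i j * π j) + Q i * X i o = X i o) ∧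
  (∀ r, -(∑ j, Y r j * π j) + P r * Y r o = -(Y r o)) ∧
  (∑ j, π j = κ)

/-- A triple `(v, u, w)` is TSc-primal-feasible with goal price `τ`. -/
def TScPrimalFeasible {I R J : Type*} [Fintype I] [Fintype R] [Fintype J]
    (X : I → J → ℝ) (Y : R → J → ℝ) (o : J) (τ : ℝ)
    (v : I → ℝ) (u : R → ℝ) (w : ℝ) : Prop :=
  (∀ j, 0 ≤ (∑ i, v i * X i j) - (∑ r, u r * Y r j) + w) ∧
  (∀ i, τ ≤ X i o * v i) ∧ (∀ r, τ ≤ Y r o * u r)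

theorem sum_mul_eq_of_row_balance {I J : Type*} [Fintype I] [Fintype J]
    (A : I → J → ℝ) (π : J → ℝ) (q c : I → ℝ)
    (h : ∀ i, ∑ j, A i j * π j + q i * c i = c i) (v : I → ℝ) :
    ∑ i, v i * c i = ∑ j, π j * ∑ i, v i * A i j + ∑ i, q i * (c i * v i) := by
  have row (i : I) : v i * c i = ∑ j, π j * (v i * A i j) + q i * (c i * v i) := by
    calc v i * c i = v i * (∑ j, A i j * π j + q i * c i) := by rw [h i]
      _ = _ := by
        rw [mul_add, mul_sum]
        congr 1
        · exact sum_congr rfl fun j _ => by ring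
        · ring
  simp only [row, sum_add_distrib, mul_sum]
  rw [sum_comm]

theorem mul_sum_le_sum_mul_of_le_s6 {ι : Type*} (s : Finset ι) {τ : ℝ} {q f : ι → ℝ}
    (hq : ∀ i ∈ s, 0 ≤ q i) (hf : ∀ i ∈ s, τ ≤ f i) :
    τ * ∑ i ∈ s, q i ≤ ∑ i ∈ s, q i * f i := by
  rw [mul_sum]
  exact sum_le_sum fun i hi => by rw [mul_comm]; exact mul_le_mul_of_nonneg_left (hf i hi) (hq i hi)

theorem tsc_weak_duality_general
    {I R J : Type*} [Fintype I] [Fintype R] [Fintype J]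
    (X : I → J → ℝ) (Y : R → J → ℝ)
    (o : J) (τ : ℝ) (κ : ℝ)
    (π : J → ℝ) (Q : I → ℝ) (P : R → ℝ)
    (hdual : TScDualFeasible X Y o κ π Q P)
    (v : I → ℝ) (u : R → ℝ) (w : ℝ)
    (hprimal : TScPrimalFeasible X Y o τ v u w) :
    τ * ((∑ i, Q i) + ∑ r, P r)
      ≤ (∑ i, v i * X i o) - (∑ r, u r * Y r o) + κ * w := by
  obtain ⟨hπ, hQ, hP, hin, hout, hκ⟩ := hdual
  obtain ⟨hslack, hv, hu⟩ := hprimal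
  have inputs := sum_mul_eq_of_row_balance X π Q (fun i => X i o) hin v
  have outputs := sum_mul_eq_of_row_balance Y π (fun r => -P r) (fun r => Y r o)
    (fun r => by linarith [hout r]) u
  have slack : 0 ≤ ∑ j, π j * ((∑ i, v i * X i j) - (∑ r, u r * Y r j) + w) :=
    sum_nonneg fun j _ => mul_nonneg (hπ j) (hslack j)
  have priced_inputs := mul_sum_le_sum_mul_of_le_s6 univ (fun i _ => hQ i) (fun i _ => hv i)
  have priced_outputs := mul_sum_le_sum_mul_of_le_s6 univ (fun r _ => hP r) (fun r _ => hu r)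
  simp only [neg_mul, sum_neg_distrib] at outputs
  simp only [mul_add, mul_sub, sum_add_distrib, sum_sub_distrib, ← sum_mul, hκ] at slack
  linarith

/-- Weak duality for the TSc model. -/
theorem tsc_weak_duality
    {I R J : Type*} [Fintype I] [Fintype R] [Fintype J]
    [Nonempty I] [Nonempty R] [Nonempty J]
    (X : I → J → ℝ) (Y : R → J → ℝ)
    (hX : ∀ i j, 0 < X i j) (hY : ∀ r j, 0 < Y r j)
    (o : J) (τ : ℝ) (hτ : 0 < τ) (κ : ℝ)
    (π : J → ℝ) (Q : I → ℝ) (P : R → ℝ)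
    (hdual : TScDualFeasible X Y o κ π Q P)
    (v : I → ℝ) (u : R → ℝ) (w : ℝ)
    (hprimal : TScPrimalFeasible X Y o τ v u w) :
    τ * ((∑ i, Q i) + ∑ r, P r)
      ≤ (∑ i, v i * X i o) - (∑ r, u r * Y r o) + κ * w :=
  tsc_weak_duality_general X Y o τ κ π Q P hdual v u w hprimal
end

section
/- (Theorem 4) The adjusted unit is TSc-efficient: let v : I → ℝ, u : R → ℝ, w ∈ ℝ, κ ∈ ℝ, γ ∈ ℝ, and π : J → ℝ satisfy ∑_{j∈J} π j = κ and the complementary slackness conditions (∑_{i∈I} v i · X i j − ∑_{r∈R} u r · Y r j + w) · π j = 0 for every j ∈ J, and define the benchmarks x̂ i := ∑_{j∈J} X i j · π j and ŷ r := ∑_{j∈J} Y r j · π j. Then ∑_{i∈I} v i · x̂ i − ∑_{r∈R} u r · ŷ r + κ·w = 0; equivalently, with ω := κ·w, the adjusted affected virtual input equals the adjusted affected virtual output: ∑_{i∈I} v i · x̂ i + (1 − γ)·ω = ∑_{r∈R} u r · ŷ r − γ·ω. -/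
open Finset

/-- (Theorem 4) The adjusted unit is TSc-efficient. -/
theorem tsc_adjusted_unit_efficient
    {I R J : Type*} [Fintype I] [Fintype R] [Fintype J]
    [Nonempty I] [Nonempty R] [Nonempty J]
    (X : I → J → ℝ) (Y : R → J → ℝ)
    (hX : ∀ i j, 0 < X i j) (hY : ∀ r j, 0 < Y r j)
    (o : J)
    (v : I → ℝ) (u : R → ℝ) (w κ γ : ℝ) (π : J → ℝ)
    (hκ : ∑ j, π j = κ)
    (hcs : ∀ j, ((∑ i, v i * X i j) - (∑ r, u r * Y r j) + w) * π j = 0)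
    (xhat : I → ℝ) (hx : ∀ i, xhat i = ∑ j, X i j * π j)
    (yhat : R → ℝ) (hy : ∀ r, yhat r = ∑ j, Y r j * π j)
    (ω : ℝ) (hω : ω = κ * w) :
    ((∑ i, v i * xhat i) - (∑ r, u r * yhat r) + κ * w = 0) ∧
    ((∑ i, v i * xhat i) + (1 - γ) * ω = (∑ r, u r * yhat r) - γ * ω) := by
  have hsum : ∑ j, ((∑ i, v i * X i j) - (∑ r, u r * Y r j) + w) * π j = 0 := by
    simp [hcs]
  have hmain : (∑ i, v i * xhat i) - (∑ r, u r * yhat r) + κ * w = 0 := by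
    have h1 : ∑ i, v i * xhat i = ∑ j, (∑ i, v i * X i j) * π j := by
      simp only [hx, Finset.mul_sum, Finset.sum_mul]
      rw [Finset.sum_comm]
      ring_nf
    have h2 : ∑ r, u r * yhat r = ∑ j, (∑ r, u r * Y r j) * π j := by
      simp only [hy, Finset.mul_sum, Finset.sum_mul]
      rw [Finset.sum_comm]
      ring_nf
    have h3 : κ * w = ∑ j, w * π j := by
      rw [← hκ, Finset.sum_mul]
      simp [mul_comm]
    rw [h1, h2, h3, ← hsum, ← Finset.sum_sub_distrib, ← Finset.sum_add_distrib]
    apply Finset.sum_congr rfl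
    intros; ring
  exact ⟨hmain, by rw [hω]; linarith⟩
end
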